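/- arXiv:2210.00508 — 2 statements merged into one kernel-verified Lean document; each statement's English description precedes it below -/
import Mathlib

section
/- For all 1 ≤ k ≤ n, the word P_0(k) is a suffix of P_0(n), where P_0(m) := R_{m+1}[:−2]. -/
def rho (w : List ℕ) : List ℕ := w.flatMap (fun n => [0, n + 1])

def R (n : ℕ) : List ℕ := rho^[n] [0]

def P0 (n : ℕ) : List ℕ := (R (n + 1)).dropLast.dropLast

/-! Since `ρ` is a morphism of the free monoid, `R (n+1)` with its last letter dropped equals
`R n` followed by `R n` with its last letter dropped. Hence `P0 (n+1) = R (n+1) ++ P0 n`, so each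
`P0 n` is a suffix of the next. -/

lemma rho_append (u v : List ℕ) : rho (u ++ v) = rho u ++ rho v :=
  List.flatMap_append

lemma R_succ (n : ℕ) : R (n + 1) = rho (R n) :=
  Function.iterate_succ_apply' rho n [0]

lemma exists_R_eq_append_singleton (n : ℕ) : ∃ w, R n = w ++ [n] := by
  induction n with
  | zero => exact ⟨[], rfl⟩
  | succ n ih =>
    obtain ⟨w, hw⟩ := ih
    exact ⟨rho w ++ [0], by simp [R_succ, hw, rho]⟩

lemma R_ne_nil (n : ℕ) : R n ≠ [] := by
  obtain ⟨w, hw⟩ := exists_R_eq_append_singleton n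
  simp [hw]

lemma dropLast_R_succ_eq_rho (n : ℕ) : (R (n + 1)).dropLast = rho (R n).dropLast ++ [0] := by
  obtain ⟨w, hw⟩ := exists_R_eq_append_singleton n
  simp [R_succ, hw, rho]

lemma dropLast_R_succ (n : ℕ) : (R (n + 1)).dropLast = R n ++ (R n).dropLast := by
  induction n with
  | zero => rfl
  | succ n ih =>
    rw [dropLast_R_succ_eq_rho, ih, rho_append, ← R_succ, List.append_assoc,
      ← dropLast_R_succ_eq_rho, ih]

lemma P0_succ (n : ℕ) : P0 (n + 1) = R (n + 1) ++ P0 n := by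
  have hne : (R (n + 1)).dropLast ≠ [] := by
    rw [dropLast_R_succ]
    exact List.append_ne_nil_of_left_ne_nil (R_ne_nil n) _
  rw [P0, dropLast_R_succ, List.dropLast_append_of_ne_nil hne, P0]

theorem P0_suffix_general (k n : ℕ) (hkn : k ≤ n) : P0 k <:+ P0 n := by
  induction n, hkn using Nat.le_induction with
  | base => exact List.suffix_refl _
  | succ m _ ih => exact ih.trans ⟨R (m + 1), (P0_succ m).symm⟩

/-- For all 1 ≤ k ≤ n, P₀(k) is a suffix of P₀(n). -/
theorem P0_suffix (k n : ℕ) (hk : 1 ≤ k) (hkn : k ≤ n) : P0 k <:+ P0 n :=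
  P0_suffix_general k n hkn
end

section
/- For every letter n ≥ 0, L(nn) = n · L(n), where L(nn) is the lexicographically least infinite word beginning with nn whose only square factor is contained in the prefix nn. -/
def HasPrefixW (f : ℕ → ℕ) (w : List ℕ) : Prop := ∀ i < w.length, f i = w.getD i 0

def SquaresInPrefix (w : List ℕ) (f : ℕ → ℕ) : Prop :=
  ∀ i l : ℕ, 0 < l → (∀ j < l, f (i + j) = f (i + l + j)) → i + 2 * l ≤ w.length

def Adm (w : List ℕ) (f : ℕ → ℕ) : Prop := HasPrefixW f w ∧ SquaresInPrefix w f

def lexLE (f g : ℕ → ℕ) : Prop :=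
  f = g ∨ ∃ i, (∀ j < i, f j = g j) ∧ f i < g i

def IsL (w : List ℕ) (f : ℕ → ℕ) : Prop := Adm w f ∧ ∀ g, Adm w g → lexLE f g

def cons1 (a : ℕ) (f : ℕ → ℕ) : ℕ → ℕ := fun n => match n with
  | 0 => a
  | n + 1 => f n

/-!
The word `n · L(n)` is admissible for `nn`: a square in it either lies in `L(n)`, which is
square-free, or starts at position `0` with period `p ≥ 2`, and then the two letters following
the first period form the square `nn` inside `L(n)`. Conversely the tail of `L(nn)` is admissible
for `n`. Minimality of both words in the lexicographic order, which is antisymmetric and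
compatible with prepending a letter, forces `L(nn) = n · L(n)`.
-/

def HasSquareAt (f : ℕ → ℕ) (i l : ℕ) : Prop := ∀ j < l, f (i + j) = f (i + l + j)

def SquareFree (f : ℕ → ℕ) : Prop := ∀ i l : ℕ, 0 < l → ¬ HasSquareAt f i l

lemma hasSquareAt_succ_iff {f : ℕ → ℕ} {i l : ℕ} :
    HasSquareAt f (i + 1) l ↔ HasSquareAt (fun k => f (k + 1)) i l := by
  simp only [HasSquareAt, Nat.add_right_comm _ 1]

lemma cons1_self_tail (f : ℕ → ℕ) : cons1 (f 0) (fun k => f (k + 1)) = f := by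
  funext k
  cases k <;> rfl

lemma lexLE_antisymm {f g : ℕ → ℕ} (hfg : lexLE f g) (hgf : lexLE g f) : f = g := by
  rcases hfg with rfl | ⟨i, hi, hlt⟩
  · rfl
  rcases hgf with rfl | ⟨i', hi', hlt'⟩
  · rfl
  rcases lt_trichotomy i i' with h | rfl | h
  · exact absurd (hi' i h) (by omega)
  · omega
  · exact absurd (hi i' h) (by omega)

lemma lexLE.cons1 (a : ℕ) {f g : ℕ → ℕ} (h : lexLE f g) : lexLE (cons1 a f) (cons1 a g) := by
  rcases h with rfl | ⟨i, hi, hlt⟩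
  · exact Or.inl rfl
  · refine Or.inr ⟨i + 1, fun j hj => ?_, hlt⟩
    cases j with
    | zero => rfl
    | succ k => exact hi k (by omega)

lemma HasPrefixW.tail {f : ℕ → ℕ} {a : ℕ} {w : List ℕ} (h : HasPrefixW f (a :: w)) :
    HasPrefixW (fun k => f (k + 1)) w :=
  fun i hi => h (i + 1) (by simpa using hi)

lemma HasPrefixW.cons1 {f : ℕ → ℕ} {w : List ℕ} (a : ℕ) (h : HasPrefixW f w) :
    HasPrefixW (cons1 a f) (a :: w) := by
  rintro (_ | i) hi
  · rfl
  · exact h i (by simpa using hi)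

lemma SquaresInPrefix.tail {f : ℕ → ℕ} {a : ℕ} {w : List ℕ} (h : SquaresInPrefix (a :: w) f) :
    SquaresInPrefix w (fun k => f (k + 1)) := by
  intro i l hl hsq
  have := h (i + 1) l hl (hasSquareAt_succ_iff.mpr hsq)
  simp only [List.length_cons] at this
  omega

lemma SquaresInPrefix.squareFree {f : ℕ → ℕ} {w : List ℕ} (h : SquaresInPrefix w f)
    (hw : w.length ≤ 1) : SquareFree f :=
  fun i l hl hsq => by have := h i l hl hsq; omega

lemma Adm.tail {f : ℕ → ℕ} {a : ℕ} {w : List ℕ} (h : Adm (a :: w) f) :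
    Adm w (fun k => f (k + 1)) :=
  ⟨h.1.tail, h.2.tail⟩

lemma HasSquareAt.cons1_zero {a : ℕ} {f : ℕ → ℕ} {l : ℕ} (h0 : f 0 = a)
    (h : HasSquareAt (cons1 a f) 0 (l + 2)) : HasSquareAt f (l + 1) 1 := by
  intro j hj
  obtain rfl : j = 0 := by omega
  have e0 : a = f (l + 1) := by simpa [_root_.cons1] using h 0 (by omega)
  have e1 : f 0 = f (l + 2) := by simpa [_root_.cons1] using h 1 (by omega)
  simp only [Nat.add_zero]
  omega

lemma Adm.cons1_self {n : ℕ} {f : ℕ → ℕ} (h : Adm [n] f) : Adm [n, n] (cons1 n f) := by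
  have hfree : SquareFree f := h.2.squareFree (by simp)
  refine ⟨h.1.cons1 n, ?_⟩
  rintro (_ | i) l hl hsq
  · obtain _ | _ | l := l
    · omega
    · simp
    · exact absurd (HasSquareAt.cons1_zero (h.1 0 (by simp)) hsq) (hfree _ 1 one_pos)
  · exact absurd (hasSquareAt_succ_iff.mp hsq) (hfree i l hl)

/-- For every letter n, L(nn) = n·L(n). -/
theorem L_nn (n : ℕ) (f g : ℕ → ℕ) (hf : IsL [n] f) (hg : IsL [n, n] g) :
    g = cons1 n f := by
  have hg0 : g 0 = n := hg.1.1 0 (by simp)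
  have hle : lexLE g (cons1 n f) := hg.2 _ hf.1.cons1_self
  have hge : lexLE (cons1 n f) g := by
    simpa only [← hg0, cons1_self_tail] using (hf.2 _ hg.1.tail).cons1 (g 0)
  exact lexLE_antisymm hle hge
end
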